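/- Let λ ∈ (0,1) and let μ be a symmetric Borel probability measure on ℝ that is ⊞_λ-infinitely divisible with rectangular R-transform C arising from a symmetric positive finite Borel measure G. Then H_μ(z) = z·T(C(H_μ(z))) for all z ∈ ℂ∖[0,∞) (so H_μ is a right inverse of the function w ↦ w/T(C(w))), and H_μ is injective on ℂ∖[0,∞). -/

import Mathlib

open MeasureTheory Complex Set Filter Topology

noncomputable section

/-- The upper half-plane. -/
def UHP : Set ℂ := {z : ℂ | 0 < z.im}

/-- The nonnegative real axis, viewed as a subset of `ℂ`. -/
def posAxis : Set ℂ := {z : ℂ | z.im = 0 ∧ 0 ≤ z.re}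

/-- `M_μ(z) = ∫ z t² / (1 - z t²) dμ(t)`. -/
def Mt (μ : Measure ℝ) (z : ℂ) : ℂ := ∫ t : ℝ, z * (t : ℂ) ^ 2 / (1 - z * (t : ℂ) ^ 2) ∂μ

/-- `H_μ(z) = z (1 + M_μ(z)) (1 + λ M_μ(z))`. -/
def Ht (l : ℝ) (μ : Measure ℝ) (z : ℂ) : ℂ :=
  z * (1 + Mt μ z) * (1 + (l : ℂ) * Mt μ z)

/-- `T(w) = (λ w + 1)(w + 1)`. -/
def Tfun (l : ℝ) (w : ℂ) : ℂ := ((l : ℂ) * w + 1) * (w + 1)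

/-- The rectangular `R`-transform with Lévy measure `G`:
`C(z) = z ∫ (1+t²)/(1-z t²) dG(t)`. -/
def rectC (G : Measure ℝ) (z : ℂ) : ℂ :=
  z * ∫ t : ℝ, (1 + (t : ℂ) ^ 2) / (1 - z * (t : ℂ) ^ 2) ∂G

/-- `μ` is `⊞_λ`-infinitely divisible with rectangular `R`-transform `C = rectC G`:
`H_μ(x) = x T(C(H_μ(x)))` for `x < 0` close to `0`. -/
def IsRectInfDiv (l : ℝ) (μ G : Measure ℝ) : Prop :=
  ∃ ε > (0 : ℝ), ∀ x ∈ Set.Ioo (-ε) (0 : ℝ),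
    Ht l μ (x : ℂ) = (x : ℂ) * Tfun l (rectC G (Ht l μ (x : ℂ)))

/-- `ρ` is the rectangular free convolution `μ ⊞_λ ν`, where `μ` has rectangular
`R`-transform `rectC G`. -/
def IsRectConv (l : ℝ) (G ν ρ : Measure ℝ) : Prop :=
  ∃ ε > (0 : ℝ), ∀ x ∈ Set.Ioo (-ε) (0 : ℝ),
    Tfun l (Mt ρ (x : ℂ) - rectC G (Ht l ρ (x : ℂ))) ≠ 0 ∧
    Ht l ρ (x : ℂ) =
      Ht l ν (Ht l ρ (x : ℂ) / Tfun l (Mt ρ (x : ℂ) - rectC G (Ht l ρ (x : ℂ))))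

/-! On `ℂ ∖ [0, ∞)` every transform involved is a rational expression in `z` and
`∫ (1 - z t²)⁻¹ dν(t)`, which is holomorphic there by differentiation under the integral sign:
`‖1 - z s‖` is bounded below uniformly in `s ≥ 0` and locally uniformly in `z`.
`H_μ` maps `ℂ ∖ [0, ∞)` into itself (off the real axis `H_μ(z)` is a product of two factors
whose imaginary parts have the same sign; on the negative axis it is negative), so both sides of
`H_μ(z) = z T(C(H_μ(z)))` are holomorphic on this connected open set. They agree on an interval
of the negative axis, hence everywhere by the identity theorem. Injectivity follows because
`z = H_μ(z) / T(C(H_μ(z)))`, where the denominator cannot vanish since `T(C(0)) = 1`. -/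

open Metric

lemma AnalyticOnNhd.eqOn_of_eqOn_ofReal_Ioo {f g : ℂ → ℂ} {U : Set ℂ}
    (hf : AnalyticOnNhd ℂ f U) (hg : AnalyticOnNhd ℂ g U) (hU : IsPreconnected U) {a b : ℝ}
    (hab : a < b) (hsub : ∀ x ∈ Ioo a b, (x : ℂ) ∈ U) (hfg : ∀ x ∈ Ioo a b, f x = g x) :
    EqOn f g U := by
  obtain ⟨x₀, hx₀⟩ := nonempty_Ioo.2 hab
  refine hf.eqOn_of_preconnected_of_frequently_eq hg hU (hsub x₀ hx₀) ?_
  have hofReal : Tendsto ((↑) : ℝ → ℂ) (𝓝[≠] x₀) (𝓝[≠] (x₀ : ℂ)) :=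
    tendsto_nhdsWithin_of_tendsto_nhds_of_eventually_within _
      (continuous_ofReal.continuousWithinAt.tendsto)
      (eventually_nhdsWithin_of_forall fun x hx => by simpa using hx)
  exact hofReal.frequently ((eventually_nhdsWithin_of_eventually_nhds
    (Ioo_mem_nhds hx₀.1 hx₀.2)).mono hfg).frequently

lemma Set.InjOn.of_eq_mul_comp {M : Type*} [MulZeroClass M] [IsRightCancelMulZero M]
    {f φ : M → M} {s : Set M} (hφ : φ 0 ≠ 0) (h : ∀ z ∈ s, f z = z * φ (f z)) : InjOn f s := by
  intro z₁ h₁ z₂ h₂ heq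
  have hf₂ := h z₂ h₂
  have hφ₂ : φ (f z₂) ≠ 0 := fun h0 => hφ (by rw [h0, mul_zero] at hf₂; rwa [hf₂] at h0)
  refine mul_right_cancel₀ hφ₂ ?_
  rw [← hf₂, ← heq, ← h z₁ h₁]

lemma compl_posAxis_eq_neg_slitPlane : posAxisᶜ = -slitPlane := by
  ext z
  simp only [posAxis, mem_compl_iff, mem_ofPred_eq, Set.mem_neg, mem_slitPlane_iff, neg_re, neg_im,
    neg_pos, ne_eq, neg_eq_zero, not_and_or, not_le]
  tauto

lemma isOpen_compl_posAxis : IsOpen posAxisᶜ := by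
  rw [compl_posAxis_eq_neg_slitPlane]
  exact isOpen_slitPlane.neg

lemma isPreconnected_compl_posAxis : IsPreconnected posAxisᶜ := by
  rw [compl_posAxis_eq_neg_slitPlane]
  exact (starConvex_one_slitPlane.neg.isPathConnected
    (Set.neg_mem_neg.2 one_mem_slitPlane)).isConnected.isPreconnected

lemma ofReal_mem_posAxis {x : ℝ} (hx : 0 ≤ x) : (x : ℂ) ∈ posAxis := ⟨ofReal_im x, hx⟩

lemma ofReal_mem_compl_posAxis {x : ℝ} (hx : x < 0) : (x : ℂ) ∈ posAxisᶜ :=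
  fun h => (not_le.2 hx) h.2

/-- With `d` the distance from `z` to `[0, ∞)`: `‖1 - z s‖ = s ‖s⁻¹ - z‖ ≥ s d` since
`s⁻¹ ∈ [0, ∞)`, and `‖1 - z s‖ ≥ 1 - ‖z‖ s`; one of the two is `≥ d / (‖z‖ + d)` according as
`s ≥ (‖z‖ + d)⁻¹` or not. -/
lemma div_le_norm_one_sub_mul (z : ℂ) {s : ℝ} (hs : 0 ≤ s) :
    infDist z posAxis / (‖z‖ + infDist z posAxis) ≤ ‖1 - z * s‖ := by
  set d := infDist z posAxis
  have hd : 0 ≤ d := infDist_nonneg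
  rcases (add_nonneg (norm_nonneg z) hd).eq_or_lt with h0 | hpos
  · rw [← h0, div_zero]; exact norm_nonneg _
  rw [div_le_iff₀ hpos]
  rcases le_or_gt 1 (s * (‖z‖ + d)) with hbig | hsmall
  · have hs0 : s ≠ 0 := by rintro rfl; norm_num at hbig
    have hfar : s * d ≤ ‖1 - z * s‖ := by
      have hdist : d ≤ dist ((s⁻¹ : ℝ) : ℂ) z :=
        (infDist_le_dist_of_mem (ofReal_mem_posAxis (inv_nonneg.2 hs))).trans_eq (dist_comm _ _)
      have hfactor : 1 - z * s = s * (((s⁻¹ : ℝ) : ℂ) - z) := by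
        have : (s : ℂ) ≠ 0 := ofReal_ne_zero.2 hs0
        push_cast; field_simp
      rw [hfactor, norm_mul, norm_real, Real.norm_of_nonneg hs, ← dist_eq_norm]
      exact mul_le_mul_of_nonneg_left hdist hs
    nlinarith
  · have hnear : 1 - ‖z‖ * s ≤ ‖1 - z * s‖ := by
      calc 1 - ‖z‖ * s = ‖(1 : ℂ)‖ - ‖z * s‖ := by simp [abs_of_nonneg hs]
        _ ≤ ‖1 - z * s‖ := norm_sub_norm_le _ _
    nlinarith [norm_nonneg z]

lemma eventually_le_norm_one_sub_mul_sq {z₀ : ℂ} (hz₀ : z₀ ∈ posAxisᶜ) :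
    ∃ c : ℝ, 0 < c ∧ ∀ᶠ z in 𝓝 z₀, ∀ t : ℝ, c ≤ ‖1 - z * (t : ℂ) ^ 2‖ := by
  have hd : 0 < infDist z₀ posAxis :=
    (isOpen_compl_iff.1 isOpen_compl_posAxis).notMem_iff_infDist_pos
      ⟨0, ofReal_mem_posAxis le_rfl⟩ |>.1 hz₀
  set f : ℂ → ℝ := fun z => infDist z posAxis / (‖z‖ + infDist z posAxis)
  have hf : 0 < f z₀ := div_pos hd (by positivity)
  have hcont : ContinuousAt f z₀ :=
    (continuous_infDist_pt _).continuousAt.div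
      (continuous_norm.add (continuous_infDist_pt _)).continuousAt (by positivity)
  refine ⟨f z₀ / 2, half_pos hf, ?_⟩
  filter_upwards [hcont.eventually (lt_mem_nhds (half_lt_self hf))] with z hz t
  exact_mod_cast hz.le.trans (div_le_norm_one_sub_mul z (sq_nonneg t))

lemma exists_pos_le_norm_one_sub_mul_sq {z : ℂ} (hz : z ∈ posAxisᶜ) :
    ∃ c : ℝ, 0 < c ∧ ∀ t : ℝ, c ≤ ‖1 - z * (t : ℂ) ^ 2‖ :=
  let ⟨c, hc, h⟩ := eventually_le_norm_one_sub_mul_sq hz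
  ⟨c, hc, h.self_of_nhds⟩

lemma one_sub_mul_sq_ne_zero {z : ℂ} (hz : z ∈ posAxisᶜ) (t : ℝ) : 1 - z * (t : ℂ) ^ 2 ≠ 0 := by
  obtain ⟨c, hc, h⟩ := exists_pos_le_norm_one_sub_mul_sq hz
  exact norm_pos_iff.1 (hc.trans_le (h t))

lemma continuous_inv_one_sub_mul_sq {z : ℂ} (hz : z ∈ posAxisᶜ) :
    Continuous fun t : ℝ => (1 - z * (t : ℂ) ^ 2)⁻¹ :=
  (by fun_prop : Continuous fun t : ℝ => 1 - z * (t : ℂ) ^ 2).inv₀ (one_sub_mul_sq_ne_zero hz)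

lemma norm_inv_one_sub_mul_sq_le {z : ℂ} {c : ℝ} (hc : 0 < c)
    (h : ∀ t : ℝ, c ≤ ‖1 - z * (t : ℂ) ^ 2‖) (t : ℝ) : ‖(1 - z * (t : ℂ) ^ 2)⁻¹‖ ≤ c⁻¹ := by
  rw [norm_inv]
  exact inv_anti₀ hc (h t)

lemma im_inv_one_sub_mul_sq (z : ℂ) (t : ℝ) :
    ((1 - z * (t : ℂ) ^ 2)⁻¹).im = z.im * (t ^ 2 * normSq (1 - z * (t : ℂ) ^ 2)⁻¹) := by
  rw [map_inv₀, inv_im]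
  simp only [← ofReal_pow, sub_im, one_im, mul_im, ofReal_im, mul_zero, ofReal_re, zero_add,
    zero_sub, neg_neg]
  ring

lemma im_mul_inv_one_sub_mul_sq (z : ℂ) (t : ℝ) :
    (z * (1 - z * (t : ℂ) ^ 2)⁻¹).im = z.im * normSq (1 - z * (t : ℂ) ^ 2)⁻¹ := by
  rw [map_inv₀, mul_im, inv_im, inv_re]
  simp only [← ofReal_pow, sub_im, one_im, mul_im, ofReal_im, mul_zero, ofReal_re, zero_add,
    zero_sub, neg_neg, sub_re, one_re, mul_re, sub_zero]
  ring

lemma normSq_inv_le_re_inv_one_sub_mul_sq {z : ℂ} (hre : z.re ≤ 0) (t : ℝ) :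
    normSq (1 - z * (t : ℂ) ^ 2)⁻¹ ≤ ((1 - z * (t : ℂ) ^ 2)⁻¹).re := by
  rw [map_inv₀, inv_re, div_eq_mul_inv]
  simp only [← ofReal_pow, sub_re, one_re, mul_re, ofReal_re, ofReal_im, mul_zero, sub_zero]
  exact le_mul_of_one_le_left (inv_nonneg.2 (normSq_nonneg _)) (by nlinarith [sq_nonneg t])

def sqResolvent (ν : Measure ℝ) (z : ℂ) : ℂ := ∫ t, (1 - z * (t : ℂ) ^ 2)⁻¹ ∂ν

section Resolvent

variable (ν : Measure ℝ) [IsFiniteMeasure ν] {z : ℂ}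

lemma integrable_inv_one_sub_mul_sq (hz : z ∈ posAxisᶜ) :
    Integrable (fun t : ℝ => (1 - z * (t : ℂ) ^ 2)⁻¹) ν := by
  obtain ⟨c, hc, h⟩ := exists_pos_le_norm_one_sub_mul_sq hz
  exact .of_bound (continuous_inv_one_sub_mul_sq hz).aestronglyMeasurable c⁻¹
    (ae_of_all _ (norm_inv_one_sub_mul_sq_le hc h))

lemma integrable_normSq_inv_one_sub_mul_sq (hz : z ∈ posAxisᶜ) :
    Integrable (fun t : ℝ => normSq (1 - z * (t : ℂ) ^ 2)⁻¹) ν := by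
  obtain ⟨c, hc, h⟩ := exists_pos_le_norm_one_sub_mul_sq hz
  refine .of_bound (continuous_normSq.comp (continuous_inv_one_sub_mul_sq hz)).aestronglyMeasurable
    (c⁻¹ ^ 2) (ae_of_all _ fun t => ?_)
  rw [Real.norm_of_nonneg (normSq_nonneg _), normSq_eq_norm_sq]
  gcongr
  exact norm_inv_one_sub_mul_sq_le hc h t

lemma differentiableOn_sqResolvent : DifferentiableOn ℂ (sqResolvent ν) posAxisᶜ := by
  intro z₀ hz₀
  obtain ⟨c, hc, hev⟩ := eventually_le_norm_one_sub_mul_sq hz₀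
  have hr : 0 < ‖z₀‖ := norm_pos_iff.2 fun h => hz₀ (h ▸ ofReal_mem_posAxis le_rfl)
  obtain ⟨ε, hε, hball⟩ := Metric.eventually_nhds_iff_ball.1 <| hev.and <|
    (isOpen_compl_posAxis.eventually_mem hz₀).and <|
      continuous_norm.continuousAt.eventually (lt_mem_nhds (half_lt_self hr))
  refine (hasDerivAt_integral_of_dominated_loc_of_deriv_le
    (F := fun z (t : ℝ) => (1 - z * (t : ℂ) ^ 2)⁻¹)
    (F' := fun z (t : ℝ) => (t : ℂ) ^ 2 / (1 - z * (t : ℂ) ^ 2) ^ 2)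
    (bound := fun _ => (‖z₀‖ / 2)⁻¹ * (c⁻¹ ^ 2 + c⁻¹)) (ball_mem_nhds z₀ hε) ?_
    (integrable_inv_one_sub_mul_sq ν hz₀) ?_ ?_ (integrable_const _) ?_).2.differentiableAt
    |>.differentiableWithinAt
  · filter_upwards [ball_mem_nhds z₀ hε] with z hz
    exact (continuous_inv_one_sub_mul_sq (hball z hz).2.1).aestronglyMeasurable
  · exact ((by fun_prop : Continuous fun t : ℝ => (t : ℂ) ^ 2).div (by fun_prop)
      fun t => pow_ne_zero 2 (one_sub_mul_sq_ne_zero hz₀ t)).aestronglyMeasurable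
  · refine ae_of_all _ fun t z hz => ?_
    obtain ⟨hcz, hzΩ, hnorm⟩ := hball z hz
    have hz0 : z ≠ 0 := norm_pos_iff.1 (by linarith)
    have hw := one_sub_mul_sq_ne_zero hzΩ t
    have hinv := norm_inv_one_sub_mul_sq_le hc hcz t
    -- `t² / w² = z⁻¹ (w⁻² - w⁻¹)` for `w = 1 - z t²`, which makes the bound uniform in `t`
    have heq : (t : ℂ) ^ 2 / (1 - z * (t : ℂ) ^ 2) ^ 2 =
        z⁻¹ * ((1 - z * (t : ℂ) ^ 2)⁻¹ ^ 2 - (1 - z * (t : ℂ) ^ 2)⁻¹) := by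
      field_simp
      ring
    rw [heq, norm_mul, norm_inv]
    gcongr
    calc _ ≤ ‖(1 - z * (t : ℂ) ^ 2)⁻¹ ^ 2‖ + ‖(1 - z * (t : ℂ) ^ 2)⁻¹‖ := norm_sub_le _ _
      _ ≤ c⁻¹ ^ 2 + c⁻¹ := by rw [norm_pow]; gcongr
  · refine ae_of_all _ fun t z hz => ?_
    have hw := one_sub_mul_sq_ne_zero (hball z hz).2.1 t
    simpa using (((hasDerivAt_id' z).mul_const ((t : ℂ) ^ 2)).const_sub 1).fun_inv hw

lemma rectC_eq_sqResolvent (hz : z ∈ posAxisᶜ) :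
    rectC ν z = (1 + z) * sqResolvent ν z - ν.real univ := by
  have key : ∀ t : ℝ, z * ((1 + (t : ℂ) ^ 2) / (1 - z * (t : ℂ) ^ 2)) =
      (1 + z) * (1 - z * (t : ℂ) ^ 2)⁻¹ - 1 := fun t => by
    have := one_sub_mul_sq_ne_zero hz t
    field_simp
    ring
  rw [rectC, ← integral_const_mul, integral_congr_ae (ae_of_all _ key),
    integral_sub ((integrable_inv_one_sub_mul_sq ν hz).const_mul _) (integrable_const 1),
    integral_const_mul, integral_const, sqResolvent, real_smul, mul_one]

lemma im_sqResolvent (hz : z ∈ posAxisᶜ) :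
    (sqResolvent ν z).im = z.im * ∫ t, t ^ 2 * normSq (1 - z * (t : ℂ) ^ 2)⁻¹ ∂ν := by
  rw [sqResolvent, ← integral_const_mul]
  exact (integral_im (integrable_inv_one_sub_mul_sq ν hz)).symm.trans
    (integral_congr_ae (ae_of_all _ fun t => im_inv_one_sub_mul_sq z t))

lemma im_mul_sqResolvent (hz : z ∈ posAxisᶜ) :
    (z * sqResolvent ν z).im = z.im * ∫ t, normSq (1 - z * (t : ℂ) ^ 2)⁻¹ ∂ν := by
  rw [sqResolvent, ← integral_const_mul, ← integral_const_mul]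
  exact (integral_im ((integrable_inv_one_sub_mul_sq ν hz).const_mul z)).symm.trans
    (integral_congr_ae (ae_of_all _ fun t => im_mul_inv_one_sub_mul_sq z t))

lemma integral_normSq_le_re_sqResolvent (hz : z ∈ posAxisᶜ) (hre : z.re ≤ 0) :
    ∫ t, normSq (1 - z * (t : ℂ) ^ 2)⁻¹ ∂ν ≤ (sqResolvent ν z).re :=
  (integral_mono (integrable_normSq_inv_one_sub_mul_sq ν hz)
    (integrable_inv_one_sub_mul_sq ν hz).re
    fun t => normSq_inv_le_re_inv_one_sub_mul_sq hre t).trans_eq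
    (integral_re (integrable_inv_one_sub_mul_sq ν hz))

lemma integral_normSq_pos [NeZero ν] (hz : z ∈ posAxisᶜ) :
    0 < ∫ t, normSq (1 - z * (t : ℂ) ^ 2)⁻¹ ∂ν := by
  refine (integral_pos_iff_support_of_nonneg (fun t => normSq_nonneg _)
    (integrable_normSq_inv_one_sub_mul_sq ν hz)).2 ?_
  rw [Function.support_eq_univ fun t => ?_]
  · simpa using NeZero.ne ν
  · exact (normSq_pos.2 (inv_ne_zero (one_sub_mul_sq_ne_zero hz t))).ne'

end Resolvent

lemma Mt_eq_sqResolvent_sub_one (μ : Measure ℝ) [IsProbabilityMeasure μ] {z : ℂ}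
    (hz : z ∈ posAxisᶜ) : Mt μ z = sqResolvent μ z - 1 := by
  have key : ∀ t : ℝ, z * (t : ℂ) ^ 2 / (1 - z * (t : ℂ) ^ 2) = (1 - z * (t : ℂ) ^ 2)⁻¹ - 1 :=
    fun t => by
      have := one_sub_mul_sq_ne_zero hz t
      field_simp
      ring
  rw [Mt, integral_congr_ae (ae_of_all _ key),
    integral_sub (integrable_inv_one_sub_mul_sq μ hz) (integrable_const 1), integral_const,
    sqResolvent, probReal_univ, one_smul]

lemma Ht_eq_sqResolvent (l : ℝ) (μ : Measure ℝ) [IsProbabilityMeasure μ] {z : ℂ}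
    (hz : z ∈ posAxisᶜ) :
    Ht l μ z = z * sqResolvent μ z * (1 - l + l * sqResolvent μ z) := by
  rw [Ht, Mt_eq_sqResolvent_sub_one μ hz]
  ring

lemma mul_mem_compl_posAxis {a b : ℂ} (ha : a.im ≠ 0) (hab : 0 ≤ a.im * b.im) (hb : b ≠ 0) :
    a * b ∈ posAxisᶜ := by
  rintro ⟨him, hre⟩
  rw [mul_im] at him
  rw [mul_re] at hre
  have key : a.im ^ 2 * (a.re * b.re - a.im * b.im) = -(a.re ^ 2 + a.im ^ 2) * (a.im * b.im) := by
    linear_combination a.im * a.re * him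
  have hprod : a.im * b.im = 0 := by
    have : 0 < a.re ^ 2 + a.im ^ 2 := by positivity
    nlinarith [mul_nonneg (sq_nonneg a.im) hre]
  have hbim : b.im = 0 := (mul_eq_zero.1 hprod).resolve_left ha
  have hbre : b.re = 0 := by simpa [hbim, ha] using him
  exact hb (Complex.ext hbre hbim)

lemma Ht_mem_compl_posAxis {l : ℝ} (hl0 : 0 ≤ l) (hl1 : l ≤ 1) (μ : Measure ℝ)
    [IsProbabilityMeasure μ] {z : ℂ} (hz : z ∈ posAxisᶜ) : Ht l μ z ∈ posAxisᶜ := by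
  rw [Ht_eq_sqResolvent l μ hz]
  set I := sqResolvent μ z
  set A := ∫ t, normSq (1 - z * (t : ℂ) ^ 2)⁻¹ ∂μ
  have hA : 0 < A := integral_normSq_pos μ hz
  set B := ∫ t, t ^ 2 * normSq (1 - z * (t : ℂ) ^ 2)⁻¹ ∂μ
  have hB : 0 ≤ B := integral_nonneg fun t => mul_nonneg (sq_nonneg t) (normSq_nonneg _)
  have hIim : I.im = z.im * B := im_sqResolvent μ hz
  have hzI : (z * I).im = z.im * A := im_mul_sqResolvent μ hz
  have hQim : (1 - l + l * I).im = l * I.im := by simp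
  rcases eq_or_ne z.im 0 with hzim | hzim
  · have hzre : z.re < 0 := not_le.1 fun h => hz ⟨hzim, h⟩
    have hIre : A ≤ I.re := integral_normSq_le_re_sqResolvent μ hz hzre.le
    rw [hzim, zero_mul] at hIim
    rintro ⟨-, hre⟩
    have hIre' : 0 < I.re := hA.trans_le hIre
    have hQre : 0 < 1 - l + l * I.re := by nlinarith [mul_nonneg hl0 hIre'.le]
    simp only [mul_re, mul_im, hzim, hIim, sub_re, add_re, one_re, ofReal_re, ofReal_im, mul_zero,
      zero_mul, sub_zero, add_zero] at hre
    linarith [mul_neg_of_neg_of_pos (mul_neg_of_neg_of_pos hzre hIre') hQre]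
  · refine mul_mem_compl_posAxis (hzI ▸ mul_ne_zero hzim hA.ne') ?_ ?_
    · rw [hzI, hQim, hIim]
      have := mul_nonneg (mul_nonneg hl0 hA.le) hB
      nlinarith [sq_nonneg z.im]
    · -- if `1 - l + l I = 0` then `I` is real, and comparing `(z I).im = z.im A` gives `I.re = A`
      intro hQ
      have hQre : 1 - l + l * I.re = 0 := by simpa using congrArg re hQ
      have hlI : l * I.im = 0 := by simpa [hQim] using congrArg im hQ
      have hlIre : l * I.re = l * A := by
        refine mul_left_cancel₀ hzim ?_
        linear_combination l * (mul_im z I).symm.trans hzI - z.re * hlI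
      have hl : l = 1 := by nlinarith [mul_nonneg hl0 hA.le]
      subst hl
      linarith

lemma differentiableOn_Ht (l : ℝ) (μ : Measure ℝ) [IsProbabilityMeasure μ] :
    DifferentiableOn ℂ (Ht l μ) posAxisᶜ := by
  have hI := differentiableOn_sqResolvent μ
  refine DifferentiableOn.congr
    (f := fun z => z * sqResolvent μ z * (1 - l + l * sqResolvent μ z)) ?_
    fun z hz => Ht_eq_sqResolvent l μ hz
  fun_prop (disch := assumption)

lemma differentiableOn_rectC (G : Measure ℝ) [IsFiniteMeasure G] :
    DifferentiableOn ℂ (rectC G) posAxisᶜ := by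
  have hI := differentiableOn_sqResolvent G
  refine DifferentiableOn.congr (f := fun z => (1 + z) * sqResolvent G z - G.real univ)
    ?_ fun z hz => rectC_eq_sqResolvent G hz
  fun_prop (disch := assumption)

lemma differentiable_Tfun (l : ℝ) : Differentiable ℂ (Tfun l) := by
  unfold Tfun
  fun_prop

theorem stmt10_general (l : ℝ) (hl : l ∈ Set.Ioo (0 : ℝ) 1)
    (μ : Measure ℝ) [IsProbabilityMeasure μ]
    (G : Measure ℝ) [IsFiniteMeasure G]
    (hID : IsRectInfDiv l μ G) :
    (∀ z : ℂ, z ∉ posAxis → Ht l μ z = z * Tfun l (rectC G (Ht l μ z))) ∧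
    Set.InjOn (Ht l μ) {z : ℂ | z ∉ posAxis} := by
  have hmaps : MapsTo (Ht l μ) posAxisᶜ posAxisᶜ := fun z hz =>
    Ht_mem_compl_posAxis hl.1.le hl.2.le μ hz
  have hH := differentiableOn_Ht l μ
  have hRHS : DifferentiableOn ℂ (fun z => z * Tfun l (rectC G (Ht l μ z))) posAxisᶜ :=
    differentiableOn_id.mul ((differentiable_Tfun l).comp_differentiableOn
      ((differentiableOn_rectC G).comp hH hmaps))
  obtain ⟨ε, hε, hid⟩ := hID
  have heq : EqOn (Ht l μ) (fun z => z * Tfun l (rectC G (Ht l μ z))) posAxisᶜ :=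
    (hH.analyticOnNhd isOpen_compl_posAxis).eqOn_of_eqOn_ofReal_Ioo
      (hRHS.analyticOnNhd isOpen_compl_posAxis) isPreconnected_compl_posAxis (neg_lt_zero.2 hε)
      (fun x hx => ofReal_mem_compl_posAxis hx.2) hid
  exact ⟨fun z hz => heq hz,
    .of_eq_mul_comp (φ := fun w => Tfun l (rectC G w)) (by simp [Tfun, rectC]) fun z hz => heq hz⟩

/-- If `μ` is `⊞_λ`-infinitely divisible with rectangular `R`-transform
`C = rectC G`, then `H_μ(z) = z T(C(H_μ(z)))` on all of `ℂ∖[0,∞)` (so `H_μ` is a right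
inverse of `w ↦ w / T(C(w))`), and `H_μ` is injective on `ℂ∖[0,∞)`. -/
theorem stmt10 (l : ℝ) (hl : l ∈ Set.Ioo (0 : ℝ) 1)
    (μ : Measure ℝ) [IsProbabilityMeasure μ]
    (hμsym : Measure.map (fun t : ℝ => -t) μ = μ)
    (G : Measure ℝ) [IsFiniteMeasure G]
    (hGsym : Measure.map (fun t : ℝ => -t) G = G)
    (hID : IsRectInfDiv l μ G) :
    (∀ z : ℂ, z ∉ posAxis → Ht l μ z = z * Tfun l (rectC G (Ht l μ z))) ∧
    Set.InjOn (Ht l μ) {z : ℂ | z ∉ posAxis} :=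
  stmt10_general l hl μ G hID

end
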